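/- Let γ : ℝ → ℝ² be a C¹, L-periodic (L > 0) curve with γ'(s) ≠ 0 for all s, let K denote its image, and let n(s) = J(γ'(s))/‖γ'(s)‖ be the unit normal. Then for every point p ∈ ℝ² with dist(p, K) < 1 there exist s ∈ ℝ and t ∈ (−1, 1) such that p = γ(s) + t·n(s) and |t| = dist(p, K). In other words, the image of the ribbon map Γ(s, t) = γ(s) + t·n(s), (s, t) ∈ ℝ × (−1, 1), contains every point at distance less than 1 from the curve. -/

import Mathlib

/-!
A periodic continuous curve has compact image, so every point `p` has a closest point
`γ s` on it. At a minimum of `u ↦ ‖p - γ u‖²` the derivative `-2 ⟪p - γ s, γ' s⟫` vanishes,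
so `p - γ s` is orthogonal to `γ' s`; in the plane this makes it a multiple `t • n s` of the
unit normal, with `|t| = ‖p - γ s‖ = dist (p, K) < 1`.
-/

noncomputable section

/-- Rotation by π/2 in the plane: `J (x, y) = (-y, x)`. -/
def J (v : EuclideanSpace ℝ (Fin 2)) : EuclideanSpace ℝ (Fin 2) := WithLp.toLp 2 ![-(v 1), v 0]

open scoped RealInnerProductSpace

lemma norm_J (v : EuclideanSpace ℝ (Fin 2)) : ‖J v‖ = ‖v‖ := by
  simp [EuclideanSpace.norm_eq, Fin.sum_univ_two, J]
  ring_nf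

lemma eq_smul_J_of_inner_eq_zero {v w : EuclideanSpace ℝ (Fin 2)} (hv : v ≠ 0)
    (h : ⟪w, v⟫ = 0) : ∃ c : ℝ, w = c • J v := by
  have hD : v 0 ^ 2 + v 1 ^ 2 ≠ 0 := by
    simpa [EuclideanSpace.norm_sq_eq, Fin.sum_univ_two] using
      pow_ne_zero 2 (norm_ne_zero_iff.mpr hv)
  have hin : w 0 * v 0 + w 1 * v 1 = 0 := by
    simp [PiLp.inner_apply, Fin.sum_univ_two] at h; linarith
  refine ⟨(w 1 * v 0 - w 0 * v 1) / (v 0 ^ 2 + v 1 ^ 2), ?_⟩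
  ext i
  fin_cases i <;> simp [J] <;> field_simp
  · linear_combination v 0 * hin
  · linear_combination v 1 * hin

lemma exists_eq_smul_unit_normal {v w : EuclideanSpace ℝ (Fin 2)} (hv : v ≠ 0)
    (h : ⟪w, v⟫ = 0) : ∃ t : ℝ, w = t • (‖v‖⁻¹ • J v) ∧ |t| = ‖w‖ := by
  obtain ⟨c, rfl⟩ := eq_smul_J_of_inner_eq_zero hv h
  have hv' : ‖v‖ ≠ 0 := norm_ne_zero_iff.mpr hv
  refine ⟨c * ‖v‖, ?_, ?_⟩
  · rw [smul_smul, mul_assoc, mul_inv_cancel₀ hv', mul_one]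
  · rw [norm_smul, norm_J, Real.norm_eq_abs, abs_mul, abs_norm]

lemma inner_sub_eq_zero_of_isLocalMin_dist {E : Type*} [NormedAddCommGroup E]
    [InnerProductSpace ℝ E] {γ : ℝ → E} {v p : E} {s : ℝ} (hγ : HasDerivAt γ v s)
    (hmin : IsLocalMin (fun u => dist p (γ u)) s) : ⟪p - γ s, v⟫ = 0 := by
  have hsq : IsLocalMin (fun u => ‖γ u - p‖ ^ 2) s := by
    filter_upwards [hmin] with u hu
    simp only [← dist_eq_norm, dist_comm _ p]
    gcongr
  have h := hsq.hasDerivAt_eq_zero (hγ.sub_const p).norm_sq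
  rw [← neg_sub, inner_neg_left] at h
  linarith

/-- The ribbon map of a C¹ periodic immersed plane curve covers the open
`1`-neighbourhood of the curve: every point `p` at distance `< 1` from the image `K`
of `γ` is of the form `γ s + t • n s` with `t ∈ (-1, 1)` and `|t| = dist (p, K)`,
where `n s = J (γ' s) / ‖γ' s‖` is the unit normal. -/
theorem ribbon_covers_neighbourhood
    (γ : ℝ → EuclideanSpace ℝ (Fin 2)) (L : ℝ) (hL : 0 < L)
    (hC1 : ContDiff ℝ 1 γ) (hper : Function.Periodic γ L)
    (himm : ∀ s, deriv γ s ≠ 0)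
    (p : EuclideanSpace ℝ (Fin 2))
    (hp : Metric.infDist p (Set.range γ) < 1) :
    ∃ s : ℝ, ∃ t ∈ Set.Ioo (-1 : ℝ) 1,
      p = γ s + t • (‖deriv γ s‖⁻¹ • J (deriv γ s)) ∧
      |t| = Metric.infDist p (Set.range γ) := by
  have hK : IsCompact (Set.range γ) := hper.compact_of_continuous hL.ne' hC1.continuous
  obtain ⟨_, ⟨s, rfl⟩, hdist⟩ := hK.exists_infDist_eq_dist (Set.range_nonempty γ) p
  have hmin : IsLocalMin (fun u => dist p (γ u)) s := .of_forall fun u => by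
    dsimp only; rw [← hdist]; exact Metric.infDist_le_dist_of_mem (Set.mem_range_self u)
  have horth : ⟪p - γ s, deriv γ s⟫ = 0 :=
    inner_sub_eq_zero_of_isLocalMin_dist (hC1.differentiable one_ne_zero s).hasDerivAt hmin
  obtain ⟨t, hpt, ht⟩ := exists_eq_smul_unit_normal (himm s) horth
  rw [hdist, dist_eq_norm, ← ht] at hp ⊢
  exact ⟨s, t, abs_lt.mp hp, by rw [← hpt, add_sub_cancel], rfl⟩

end
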